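/- Let F be a field of characteristic not 2 nor 3, and let III(−1, 1/2, α)^× be the 3-dimensional commutative F-algebra with basis ā_{−1}, ā_0, ā_1 and multiplication ā_i² = ā_i, ā_iā_{i+1} = (−3/4)((α+1)ā_0 + ā_1 + ā_{−1}) + (1/2)(ā_i + ā_{i+1}) for i = 0,−1, and ā_{−1}ā_1 = (1−α)(−3/4)((α+1)ā_0 + ā_1 + ā_{−1}) + (1/2)(ā_1 + ā_{−1}). Then ā_0 is an idempotent whose adjoint action on the algebra is semisimple with eigenvalues contained in {1, 0, −1, 1/2}, and the 1-eigenspace of ā_0 equals Fā_0. -/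

import Mathlib

/-!
With `s = ā₁ + ā₋₁` and `d = ā₁ - ā₋₁`, multiplication by `ā₀` is triangular:
`ā₀ d = d / 2` and `ā₀ s = -s - (3α + 1)/2 ā₀`. Hence `ā₀`, `4s + (3α + 1) ā₀` and `d` are
eigenvectors for `1`, `-1`, `1/2` spanning the algebra. Eigenspaces for distinct eigenvalues
are independent and `1 ∉ {-1, 1/2}` as the characteristic is not `2`, so the modular law cuts
the `1`-eigenspace down to `F ā₀`.
-/

/-- The `α`-eigenspace of the left-multiplication operator of `a`. -/
noncomputable def esp {F M : Type*} [Field F] [NonUnitalNonAssocCommRing M]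
    [Module F M] [SMulCommClass F M M] [IsScalarTower F M M] (a : M) (α : F) :
    Submodule F M :=
  Module.End.eigenspace (LinearMap.mul F M a) α

theorem Module.End.eigenspace_eq_of_sup_biSup_eq_top {R M : Type*} [CommRing R] [IsDomain R]
    [AddCommGroup M] [Module R M] [Module.IsTorsionFree R M] {f : Module.End R M} {μ : R}
    {S : Set R} {U : Submodule R M} (hμ : μ ∉ S) (hU : U ≤ f.eigenspace μ)
    (htop : U ⊔ ⨆ ν ∈ S, f.eigenspace ν = ⊤) : f.eigenspace μ = U := by
  have hdisj := f.eigenspaces_iSupIndep.disjoint_biSup hμ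
  calc f.eigenspace μ = (U ⊔ ⨆ ν ∈ S, f.eigenspace ν) ⊓ f.eigenspace μ := by
        rw [htop, top_inf_eq]
    _ = U := by rw [sup_inf_assoc_of_le _ hU, inf_comm, hdisj.eq_bot, sup_bot_eq]

section

variable {F M : Type*} [Field F] [NonUnitalNonAssocCommRing M] [Module F M]
  [SMulCommClass F M M] [IsScalarTower F M M]

theorem mem_esp_iff {a z : M} {μ : F} : z ∈ esp a μ ↔ a * z = μ • z := by
  rw [esp, Module.End.mem_eigenspace_iff, LinearMap.mul_apply']

variable {α : F} {a x y : M}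
  (hx : a * x = (-3 / 4 : F) • ((α + 1) • a + x + y) + (1 / 2 : F) • (a + x))
  (hy : a * y = (-3 / 4 : F) • ((α + 1) • a + x + y) + (1 / 2 : F) • (y + a))
include hx hy

theorem sub_mem_esp_half : x - y ∈ esp a (1 / 2 : F) := by
  rw [mem_esp_iff, mul_sub, hx, hy]
  module

theorem smul_add_add_smul_mem_esp_neg_one (h2 : (2 : F) ≠ 0) (ha : a * a = a) :
    (4 : F) • (x + y) + (3 * α + 1) • a ∈ esp a (-1 : F) := by
  rw [mem_esp_iff, mul_add, mul_smul_comm, mul_smul_comm, mul_add, hx, hy, ha]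
  have h4 : (4 : F) ≠ 0 := by
    rw [show (4 : F) = 2 * 2 by norm_num]
    exact mul_ne_zero h2 h2
  match_scalars <;> field_simp <;> ring

theorem span_le_span_singleton_sup_esp (h2 : (2 : F) ≠ 0) (ha : a * a = a) :
    Submodule.span F {y, a, x} ≤
      Submodule.span F {a} ⊔ (esp a (-1 : F) ⊔ esp a (1 / 2 : F)) := by
  set W := Submodule.span F {a} ⊔ (esp a (-1 : F) ⊔ esp a (1 / 2 : F))
  have h8 : (8 : F) ≠ 0 := by
    rw [show (8 : F) = 2 * 2 * 2 by norm_num]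
    exact mul_ne_zero (mul_ne_zero h2 h2) h2
  set v := (4 : F) • (x + y) + (3 * α + 1) • a
  have haW : a ∈ W := Submodule.mem_sup_left (Submodule.mem_span_singleton_self a)
  have hvW : v ∈ W :=
    Submodule.mem_sup_right (Submodule.mem_sup_left
      (smul_add_add_smul_mem_esp_neg_one hx hy h2 ha))
  have hdW : x - y ∈ W :=
    Submodule.mem_sup_right (Submodule.mem_sup_right (sub_mem_esp_half hx hy))
  rw [Submodule.span_le]
  rintro z (rfl | rfl | rfl)
  · rw [show z = (8 : F)⁻¹ • (v - (4 : F) • (x - z) - (3 * α + 1) • a) by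
      match_scalars <;> field_simp <;> ring]
    exact W.smul_mem _ (W.sub_mem (W.sub_mem hvW (W.smul_mem _ hdW)) (W.smul_mem _ haW))
  · exact haW
  · rw [show z = (8 : F)⁻¹ • (v + (4 : F) • (z - y) - (3 * α + 1) • a) by
      match_scalars <;> field_simp <;> ring]
    exact W.smul_mem _ (W.sub_mem (W.add_mem hvW (W.smul_mem _ hdW)) (W.smul_mem _ haW))

end

theorem one_notMem_pair_neg_one_half {F : Type*} [Field F] (h2 : (2 : F) ≠ 0) :
    (1 : F) ∉ ({-1, 1 / 2} : Set F) := by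
  rw [Set.mem_insert_iff, Set.mem_singleton_iff, not_or]
  constructor
  · intro h
    exact h2 (by linear_combination h)
  · intro h
    field_simp at h
    exact one_ne_zero (by linear_combination h)

theorem stmt18_general {F M : Type*} [Field F] [NonUnitalNonAssocCommRing M]
    [Module F M] [SMulCommClass F M M] [IsScalarTower F M M]
    (hchar2 : (2 : F) ≠ 0) (α : F)
    (b : ℤ → M)
    (hspan : Submodule.span F ({b (-1), b 0, b 1} : Set M) = ⊤)
    (hidem : ∀ i ∈ ({-1, 0, 1} : Set ℤ), b i * b i = b i)
    (hadj : ∀ i ∈ ({0, -1} : Set ℤ), b i * b (i + 1) =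
      (-3 / 4 : F) • ((α + 1) • b 0 + b 1 + b (-1)) + (1 / 2 : F) • (b i + b (i + 1))) :
    b 0 * b 0 = b 0 ∧
    esp (b 0) (1 : F) = Submodule.span F {b 0} ∧
    esp (b 0) (1 : F) ⊔ esp (b 0) (0 : F) ⊔ esp (b 0) (-1 : F) ⊔
      esp (b 0) (1 / 2 : F) = ⊤ := by
  have h00 : b 0 * b 0 = b 0 := hidem 0 (by simp)
  have h01 : b 0 * b 1 =
      (-3 / 4 : F) • ((α + 1) • b 0 + b 1 + b (-1)) + (1 / 2 : F) • (b 0 + b 1) := by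
    simpa using hadj 0 (by simp)
  have h0m : b 0 * b (-1) =
      (-3 / 4 : F) • ((α + 1) • b 0 + b 1 + b (-1)) + (1 / 2 : F) • (b (-1) + b 0) := by
    rw [mul_comm]
    simpa using hadj (-1) (by simp)
  have htop : Submodule.span F {b 0} ⊔ (esp (b 0) (-1 : F) ⊔ esp (b 0) (1 / 2 : F)) = ⊤ :=
    eq_top_iff.2 (hspan ▸ span_le_span_singleton_sup_esp h01 h0m hchar2 h00)
  have hb0 : b 0 ∈ esp (b 0) (1 : F) := mem_esp_iff.2 (by rw [h00, one_smul])
  have hesp1 : esp (b 0) (1 : F) = Submodule.span F {b 0} :=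
    Module.End.eigenspace_eq_of_sup_biSup_eq_top (one_notMem_pair_neg_one_half hchar2)
      ((Submodule.span_singleton_le_iff_mem _ _).2 hb0) (by rwa [iSup_pair])
  refine ⟨h00, hesp1, ?_⟩
  rw [eq_top_iff, ← htop, sup_assoc, ← hesp1]
  exact sup_le_sup_right le_sup_left _

/-- in the 3-dimensional algebra `III(-1, 1/2, α)^×` with basis
`ā₋₁, ā₀, ā₁`, the idempotent `ā₀` has semisimple adjoint action with
eigenvalues among `{1, 0, -1, 1/2}` and 1-eigenspace exactly `F ā₀`. -/
theorem stmt18 {F M : Type*} [Field F] [NonUnitalNonAssocCommRing M]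
    [Module F M] [SMulCommClass F M M] [IsScalarTower F M M]
    (hchar2 : (2 : F) ≠ 0) (hchar3 : (3 : F) ≠ 0) (α : F)
    (b : ℤ → M)
    (hli : LinearIndependent F ![b (-1), b 0, b 1])
    (hspan : Submodule.span F ({b (-1), b 0, b 1} : Set M) = ⊤)
    (hidem : ∀ i ∈ ({-1, 0, 1} : Set ℤ), b i * b i = b i)
    (hadj : ∀ i ∈ ({0, -1} : Set ℤ), b i * b (i + 1) =
      (-3 / 4 : F) • ((α + 1) • b 0 + b 1 + b (-1)) + (1 / 2 : F) • (b i + b (i + 1)))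
    (hout : b (-1) * b 1 =
      (1 - α) • ((-3 / 4 : F) • ((α + 1) • b 0 + b 1 + b (-1))) +
        (1 / 2 : F) • (b 1 + b (-1))) :
    b 0 * b 0 = b 0 ∧
    esp (b 0) (1 : F) = Submodule.span F {b 0} ∧
    esp (b 0) (1 : F) ⊔ esp (b 0) (0 : F) ⊔ esp (b 0) (-1 : F) ⊔
      esp (b 0) (1 / 2 : F) = ⊤ :=
  stmt18_general hchar2 α b hspan hidem hadj
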